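/- arXiv:1802.09052 — 5 statements merged into one kernel-verified Lean document; each statement's English description precedes it below -/
import Mathlib

section
/- Let T be any full binary tree with d ≥ 2 leaves modeling a merge order for d tensor-ring factors of common dimension Ĩ ≥ 2 with tensor ring rank R ≥ 1. Then the total flop cost satisfies 2·R³·Ĩ^d ≤ flops(T) ≤ 4·R³·Ĩ^d. (Theorem 1, parts 1: any merge order costs between 2R³I and 4R³I flops, where I = Ĩ^d.) -/
/-- A full binary tree: every node is a leaf or has exactly two children. -/
inductive FullBinTree where
  | leaf : FullBinTree
  | node : FullBinTree → FullBinTree → FullBinTree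

/-- Number of leaf descendants of (the root of) a tree. -/
def FullBinTree.leaves : FullBinTree → ℕ
  | .leaf => 1
  | .node l r => l.leaves + r.leaves

/-- Total flop cost of the merge order encoded by a full binary tree:
each internal node `v` contributes `2 * R^3 * It ^ (leaves v)` (`It` = Ĩ, the common
dimension of the factors), leaves contribute 0. -/
def FullBinTree.flops (R It : ℕ) : FullBinTree → ℕ
  | .leaf => 0
  | .node l r => l.flops R It + r.flops R It + 2 * R ^ 3 * It ^ (l.leaves + r.leaves)

lemma FullBinTree.one_le_leaves (T : FullBinTree) : 1 ≤ T.leaves := by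
  induction T with
  | leaf => simp [FullBinTree.leaves]
  | node l r hl hr => simp [FullBinTree.leaves]; omega

lemma flops_upper (R It : ℕ) (hIt : 2 ≤ It) (T : FullBinTree) :
    T.flops R It + 4 * R ^ 3 * It ≤ 4 * R ^ 3 * It ^ T.leaves := by
  induction T with
  | leaf => simp [FullBinTree.flops, FullBinTree.leaves]
  | node l r hl hr =>
    simp only [FullBinTree.flops, FullBinTree.leaves]
    have hx : It ≤ It ^ l.leaves := le_self_pow₀ (by omega) (by have := l.one_le_leaves; omega)
    have hy : It ≤ It ^ r.leaves := le_self_pow₀ (by omega) (by have := r.one_le_leaves; omega)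
    set x := It ^ l.leaves with hxdef
    set y := It ^ r.leaves with hydef
    have hpow : It ^ (l.leaves + r.leaves) = x * y := by rw [pow_add]
    rw [hpow]
    -- key: 2*x + 2*y ≤ x*y + 2*It  (from (x-2)(y-2) ≥ 0 and It ≥ 2)
    have hkey : 2 * x + 2 * y ≤ x * y + 2 * It := by
      have h2x : 2 ≤ x := le_trans hIt hx
      have h2y : 2 ≤ y := le_trans hIt hy
      nlinarith
    have hkey' := Nat.mul_le_mul_left (2 * R ^ 3) hkey
    nlinarith [hl, hr, hkey']

/-- Theorem 1, part 1: any merge order (full binary tree with `d ≥ 2` leaves) for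
factors of common dimension `Ĩ ≥ 2` and tensor ring rank `R ≥ 1` costs between
`2 R³ Ĩ^d` and `4 R³ Ĩ^d` flops. -/
theorem flops_bounds (R It d : ℕ) (hR : 1 ≤ R) (hIt : 2 ≤ It) (hd : 2 ≤ d)
    (T : FullBinTree) (hT : T.leaves = d) :
    2 * R ^ 3 * It ^ d ≤ T.flops R It ∧ T.flops R It ≤ 4 * R ^ 3 * It ^ d := by
  constructor
  · cases T with
    | leaf => simp [FullBinTree.leaves] at hT; omega
    | node l r =>
      simp only [FullBinTree.flops]
      simp only [FullBinTree.leaves] at hT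
      rw [hT]
      omega
  · have h := flops_upper R It hIt T
    rw [hT] at h
    omega
end

section
/- Let T be any full binary tree with d ≥ 2 leaves modeling a merge order for d tensor-ring factors of common dimension Ĩ ≥ 2 with tensor ring rank R ≥ 1. Then the peak storage satisfies R²·Ĩ^d ≤ stor(T) ≤ 2·R²·Ĩ^d. (Theorem 1, part 2: any merge order requires storing between R²I and 2R²I floats, where I = Ĩ^d.) -/
/-- Peak storage of the merge order encoded by a full binary tree: the maximum, over
internal nodes `v` with children `c₁, c₂`, of
`R² * (It^(leaves c₁) + It^(leaves c₂) + It^(leaves v))` (operands plus result of the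
merge at `v`), where `It` = Ĩ is the common dimension of the factors. -/
def FullBinTree.stor (R It : ℕ) : FullBinTree → ℕ
  | .leaf => 0
  | .node l r =>
      max (max (l.stor R It) (r.stor R It))
        (R ^ 2 * (It ^ l.leaves + It ^ r.leaves + It ^ (l.leaves + r.leaves)))

lemma sum_le (It a b : ℕ) (hIt : 2 ≤ It) (ha : 1 ≤ a) (hb : 1 ≤ b) :
    It ^ a + It ^ b + It ^ (a + b) ≤ 2 * It ^ (a + b) := by
  have h1 : It ^ a ≤ It ^ (a + b - 1) :=
    Nat.pow_le_pow_right (by omega) (by omega)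
  have h2 : It ^ b ≤ It ^ (a + b - 1) :=
    Nat.pow_le_pow_right (by omega) (by omega)
  have h3 : 2 * It ^ (a + b - 1) ≤ It ^ (a + b) := by
    have : It ^ (a + b) = It ^ (a + b - 1) * It := by
      rw [← pow_succ]; congr 1; omega
    rw [this]
    calc 2 * It ^ (a + b - 1) = It ^ (a + b - 1) * 2 := by ring
      _ ≤ It ^ (a + b - 1) * It := Nat.mul_le_mul_left _ hIt
  omega

lemma stor_le (R It : ℕ) (hIt : 2 ≤ It) (T : FullBinTree) :
    T.stor R It ≤ 2 * (R ^ 2 * It ^ T.leaves) := by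
  induction T with
  | leaf => simp [FullBinTree.stor]
  | node l r ihl ihr =>
      have hIt1 : 1 ≤ It := by omega
      have hl : It ^ l.leaves ≤ It ^ (l.leaves + r.leaves) :=
        Nat.pow_le_pow_right hIt1 (by omega)
      have hr : It ^ r.leaves ≤ It ^ (l.leaves + r.leaves) :=
        Nat.pow_le_pow_right hIt1 (by omega)
      have hsum := sum_le It l.leaves r.leaves hIt l.one_le_leaves r.one_le_leaves
      simp only [FullBinTree.stor, FullBinTree.leaves]
      apply max_le (max_le _ _)
      · calc R ^ 2 * (It ^ l.leaves + It ^ r.leaves + It ^ (l.leaves + r.leaves))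
              ≤ R ^ 2 * (2 * It ^ (l.leaves + r.leaves)) := Nat.mul_le_mul_left _ hsum
          _ = 2 * (R ^ 2 * It ^ (l.leaves + r.leaves)) := by ring
      · exact le_trans ihl (by
          have := Nat.pow_le_pow_right (show 1 ≤ It by omega)
            (show l.leaves ≤ l.leaves + r.leaves by omega)
          exact Nat.mul_le_mul_left 2 (Nat.mul_le_mul_left _ this))
      · exact le_trans ihr (by
          have := Nat.pow_le_pow_right (show 1 ≤ It by omega)
            (show r.leaves ≤ l.leaves + r.leaves by omega)
          exact Nat.mul_le_mul_left 2 (Nat.mul_le_mul_left _ this))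

/-- Theorem 1, part 2: any merge order (full binary tree with `d ≥ 2` leaves) for
factors of common dimension `Ĩ ≥ 2` and tensor ring rank `R ≥ 1` requires peak
storage between `R² Ĩ^d` and `2 R² Ĩ^d` floats. -/
theorem stor_bounds (R It d : ℕ) (hR : 1 ≤ R) (hIt : 2 ≤ It) (hd : 2 ≤ d)
    (T : FullBinTree) (hT : T.leaves = d) :
    R ^ 2 * It ^ d ≤ T.stor R It ∧ T.stor R It ≤ 2 * (R ^ 2 * It ^ d) := by
  constructor
  · cases T with
    | leaf => simp [FullBinTree.leaves] at hT; omega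
    | node l r =>
        simp only [FullBinTree.leaves] at hT
        simp only [FullBinTree.stor]
        refine le_trans ?_ (le_max_right _ _)
        rw [hT]
        exact Nat.mul_le_mul_left _ (by omega)
  · rw [← hT]; exact stor_le R It hIt T
end

section
/- Suppose d = 2^D for some natural number D ≥ 1, the common factor dimension is Ĩ ≥ 2, and the tensor ring rank is R ≥ 1. Then the perfectly balanced full binary tree with 2^D leaves (all leaves at depth D) achieves the minimum flop cost among all full binary trees with d leaves: for every full binary tree T with d leaves, flops(T) ≥ flops(balanced tree). (Theorem 1, part 3: if d is a power of 2, hierarchical merging achieves the minimum flop count.) -/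
/-- The perfectly balanced full binary tree of depth `D` (all `2^D` leaves at depth `D`). -/
def FullBinTree.balanced : ℕ → FullBinTree
  | 0 => .leaf
  | D + 1 => .node (balanced D) (balanced D)

/-- Unweighted cost: each internal node contributes `It ^ (leaves v)`. -/
def FullBinTree.cost (It : ℕ) : FullBinTree → ℕ
  | .leaf => 0
  | .node l r => l.cost It + r.cost It + It ^ (l.leaves + r.leaves)

lemma FullBinTree.flops_eq_cost (R It : ℕ) :
    ∀ T : FullBinTree, T.flops R It = 2 * R ^ 3 * T.cost It := by
  intro T
  induction T with
  | leaf => simp [FullBinTree.flops, FullBinTree.cost]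
  | node l r ihl ihr =>
      simp only [FullBinTree.flops, FullBinTree.cost, ihl, ihr]
      ring

lemma FullBinTree.leaves_pos : ∀ T : FullBinTree, 1 ≤ T.leaves := by
  intro T
  induction T with
  | leaf => simp [FullBinTree.leaves]
  | node l r ihl ihr => simp [FullBinTree.leaves]; omega

/-- Cost of the optimal (balanced-split) strategy on `n` factors. -/
def gcost (It : ℕ) : ℕ → ℕ
  | 0 => 0
  | 1 => 0
  | n + 2 => It ^ (n + 2) + gcost It ((n + 2) / 2) + gcost It ((n + 2 + 1) / 2)
termination_by n => n
decreasing_by all_goals omega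

lemma gcost_eq (It n : ℕ) (h : 2 ≤ n) :
    gcost It n = It ^ n + gcost It (n / 2) + gcost It ((n + 1) / 2) := by
  obtain ⟨m, rfl⟩ : ∃ m, n = m + 2 := ⟨n - 2, by omega⟩
  rw [gcost]

lemma gcost_star (It n : ℕ) (h : 2 ≤ n) :
    gcost It (n + 1) + It ^ n + gcost It (n / 2)
      = gcost It n + It ^ (n + 1) + gcost It (n / 2 + 1) := by
  rw [gcost_eq It (n + 1) (by omega), gcost_eq It n h]
  have h1 : (n + 1 + 1) / 2 = n / 2 + 1 := by omega
  rw [h1]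
  ring

lemma gcost_convex (It : ℕ) (hIt : 1 ≤ It) : ∀ n, 1 ≤ n →
    2 * gcost It (n + 1) ≤ gcost It n + gcost It (n + 2) := by
  intro n
  induction n using Nat.strong_induction_on with
  | _ n ih =>
    intro hn
    have amgm : 2 * It ^ (n + 1) ≤ It ^ n + It ^ (n + 2) := by
      have h2 : 2 * It ≤ It ^ 2 + 1 := by nlinarith
      calc 2 * It ^ (n + 1) = It ^ n * (2 * It) := by ring
        _ ≤ It ^ n * (It ^ 2 + 1) := Nat.mul_le_mul_left _ h2
        _ = It ^ n + It ^ (n + 2) := by ring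
    have g1 : gcost It 1 = 0 := by rw [gcost]
    rcases eq_or_lt_of_le hn with h1 | h1
    · -- n = 1
      subst h1
      have g2 : gcost It 2 = It ^ 2 := by
        rw [gcost_eq It 2 (by norm_num)]
        norm_num [g1]
      have g3 : gcost It 3 = It ^ 3 + It ^ 2 := by
        rw [gcost_eq It 3 (by norm_num)]
        norm_num [g1, g2]
      have hp : It ^ 2 ≤ It ^ 3 := Nat.pow_le_pow_right hIt (by omega)
      norm_num [g2, g3]
      linarith
    · have h2 : 2 ≤ n := h1
      have s1 := gcost_star It n h2
      have s2 := gcost_star It (n + 1) (by omega)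
      rcases Nat.even_or_odd n with he | ho
      · obtain ⟨k, rfl⟩ := he
        have e1 : (k + k) / 2 = k := by omega
        have e2 : (k + k + 1) / 2 = k := by omega
        have e3 : k + k + 1 + 1 = k + k + 2 := by omega
        rw [e1] at s1
        rw [e2, e3] at s2
        linarith
      · obtain ⟨k, rfl⟩ := ho
        have e1 : (2 * k + 1) / 2 = k := by omega
        have e2 : (2 * k + 1 + 1) / 2 = k + 1 := by omega
        have e3 : 2 * k + 1 + 1 + 1 = 2 * k + 1 + 2 := by omega
        rw [e1] at s1
        rw [e2, e3] at s2
        have hIH := ih k (by omega) (by omega)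
        linarith

lemma gcost_slope (It : ℕ) (hIt : 1 ≤ It) (a b : ℕ) (ha : 1 ≤ a) (hab : a ≤ b) :
    gcost It (a + 1) + gcost It b ≤ gcost It a + gcost It (b + 1) := by
  induction b, hab using Nat.le_induction with
  | base => linarith
  | succ b hb ih =>
      have hc := gcost_convex It hIt b (by omega)
      linarith

lemma gcost_mid (It : ℕ) (hIt : 1 ≤ It) :
    ∀ k a b, b - a = k → 1 ≤ a → a ≤ b →
      gcost It ((a + b) / 2) + gcost It ((a + b + 1) / 2) ≤ gcost It a + gcost It b := by
  intro k
  induction k using Nat.strong_induction_on with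
  | _ k ih =>
    intro a b hk ha hab
    rcases le_or_gt b (a + 1) with h | h
    · have h1 : (a + b) / 2 = a := by omega
      have h2 : (a + b + 1) / 2 = b := by omega
      rw [h1, h2]
    · have hs := gcost_slope It hIt a (b - 1) ha (by omega)
      have hIH := ih (k - 2) (by omega) (a + 1) (b - 1) (by omega) (by omega) (by omega)
      have he : a + 1 + (b - 1) = a + b := by omega
      rw [he] at hIH
      have hb : b - 1 + 1 = b := by omega
      rw [hb] at hs
      linarith

lemma gcost_subadd (It : ℕ) (hIt : 1 ≤ It) (a b : ℕ) (ha : 1 ≤ a) (hb : 1 ≤ b) :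
    gcost It (a + b) ≤ gcost It a + gcost It b + It ^ (a + b) := by
  rw [gcost_eq It (a + b) (by omega)]
  rcases le_total a b with h | h
  · have hm := gcost_mid It hIt (b - a) a b rfl ha h
    linarith
  · have hm := gcost_mid It hIt (a - b) b a rfl hb h
    rw [Nat.add_comm b a] at hm
    linarith

lemma gcost_le_cost (It : ℕ) (hIt : 1 ≤ It) :
    ∀ T : FullBinTree, gcost It T.leaves ≤ T.cost It := by
  intro T
  induction T with
  | leaf => simp [FullBinTree.leaves, gcost, FullBinTree.cost]
  | node l r ihl ihr =>
      have hl := l.leaves_pos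
      have hr := r.leaves_pos
      calc gcost It (FullBinTree.node l r).leaves
          = gcost It (l.leaves + r.leaves) := rfl
        _ ≤ gcost It l.leaves + gcost It r.leaves + It ^ (l.leaves + r.leaves) :=
            gcost_subadd It hIt _ _ hl hr
        _ ≤ l.cost It + r.cost It + It ^ (l.leaves + r.leaves) := by
            have := ihl; have := ihr; omega
        _ = (FullBinTree.node l r).cost It := rfl

lemma balanced_leaves : ∀ D, (FullBinTree.balanced D).leaves = 2 ^ D := by
  intro D
  induction D with
  | zero => rfl
  | succ D ih =>
      show (FullBinTree.balanced D).leaves + (FullBinTree.balanced D).leaves = 2 ^ (D + 1)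
      rw [ih, pow_succ]
      ring

lemma balanced_cost (It : ℕ) : ∀ D, (FullBinTree.balanced D).cost It = gcost It (2 ^ D) := by
  intro D
  induction D with
  | zero => simp [FullBinTree.balanced, FullBinTree.cost, gcost]
  | succ D ih =>
      have hx : 1 ≤ 2 ^ D := Nat.one_le_two_pow
      have h2 : (2 : ℕ) ^ (D + 1) = 2 ^ D + 2 ^ D := by rw [pow_succ]; ring
      have hge : gcost It (2 ^ D + 2 ^ D)
          = It ^ (2 ^ D + 2 ^ D) + gcost It (2 ^ D) + gcost It (2 ^ D) := by
        rw [gcost_eq It (2 ^ D + 2 ^ D) (by omega)]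
        have e1 : (2 ^ D + 2 ^ D) / 2 = 2 ^ D := by omega
        have e2 : (2 ^ D + 2 ^ D + 1) / 2 = 2 ^ D := by omega
        rw [e1, e2]
      show (FullBinTree.balanced D).cost It + (FullBinTree.balanced D).cost It
            + It ^ ((FullBinTree.balanced D).leaves + (FullBinTree.balanced D).leaves)
          = gcost It (2 ^ (D + 1))
      rw [ih, balanced_leaves, h2, hge]
      ring

/-- Theorem 1, part 3: if the number of leaves `d = 2^D` is a power of 2 (`D ≥ 1`),
with common dimension `Ĩ ≥ 2` and tensor ring rank `R ≥ 1`, the perfectly balanced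
tree (hierarchical merging) achieves the minimum flop count among all full binary
trees with `d` leaves. -/
theorem balanced_flops_minimal (R It D : ℕ) (hR : 1 ≤ R) (hIt : 2 ≤ It) (hD : 1 ≤ D)
    (T : FullBinTree) (hT : T.leaves = 2 ^ D) :
    (FullBinTree.balanced D).flops R It ≤ T.flops R It := by
  have hIt1 : 1 ≤ It := by omega
  rw [FullBinTree.flops_eq_cost, FullBinTree.flops_eq_cost]
  apply Nat.mul_le_mul_left
  calc (FullBinTree.balanced D).cost It = gcost It (2 ^ D) := balanced_cost It D
    _ = gcost It T.leaves := by rw [hT]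
    _ ≤ T.cost It := gcost_le_cost It hIt1 T
end

section
/- For natural numbers Ĩ ≥ 2 and D ≥ 2, with d = 2^D, the sequential merging flop count strictly exceeds the hierarchical merging flop count: ∑_{i=2}^{d} Ĩ^i > ∑_{i=1}^{D} 2^{D-i}·Ĩ^{2^i}. (Hence for any tensor ring rank R ≥ 1, 2R³·∑_{i=2}^{d} Ĩ^i > 2R³·∑_{i=1}^{D} 2^{D-i}·Ĩ^{2^i}.) -/
/-!
Send the `i`-th hierarchical term to the exponent `2 ^ i + (D - i)`. Since `2 ≤ Ĩ`, the term
`2 ^ (D - i) * Ĩ ^ 2 ^ i` is at most `Ĩ ^ (2 ^ i + (D - i))`, and for `D ≥ 2` these exponents are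
distinct and lie in `(2, 2 ^ D]`. So the hierarchical sum is bounded by part of the sequential sum,
and the sequential term `Ĩ ^ 2` is left over.
-/

open Finset

lemma strictMonoOn_two_pow_add_sub (D : ℕ) :
    StrictMonoOn (fun i => 2 ^ i + (D - i)) (Set.Icc 1 D) := by
  refine strictMonoOn_of_lt_add_one Set.ordConnected_Icc fun i _ hi hi1 => ?_
  have : 2 ≤ 2 ^ i := Nat.le_self_pow (by grind) 2
  grind [pow_succ]

lemma mapsTo_two_pow_add_sub {D : ℕ} (hD : 2 ≤ D) :
    Set.MapsTo (fun i => 2 ^ i + (D - i)) (Set.Icc 1 D) (Set.Ioc 2 (2 ^ D)) := by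
  exact (strictMonoOn_two_pow_add_sub D).monotoneOn.mapsTo_Icc.mono_right
    (Set.Icc_subset_Ioc (by simp only [pow_one]; omega) (by simp))

lemma pow_mul_pow_le_pow_add {a x : ℕ} (h : a ≤ x) (k m : ℕ) : a ^ k * x ^ m ≤ x ^ (m + k) := by
  rw [pow_add, mul_comm]
  exact Nat.mul_le_mul_left _ (Nat.pow_le_pow_left h k)

/-- For `Ĩ ≥ 2` and `D ≥ 2`, with `d = 2^D`, the sequential merging flop count
`2R³ ∑_{i=2}^{d} Ĩ^i` strictly exceeds the hierarchical merging flop count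
`2R³ ∑_{i=1}^{D} 2^(D-i) Ĩ^(2^i)`; equivalently, the sums compare strictly. -/
theorem sequential_gt_hierarchical (It D : ℕ) (hIt : 2 ≤ It) (hD : 2 ≤ D) :
    ∑ i ∈ Finset.Icc 1 D, 2 ^ (D - i) * It ^ 2 ^ i
      < ∑ i ∈ Finset.Icc 2 (2 ^ D), It ^ i := by
  set f : ℕ → ℕ := fun i => 2 ^ i + (D - i)
  have hf_inj : Set.InjOn f ↑(Icc 1 D) := by
    simpa only [coe_Icc] using (strictMonoOn_two_pow_add_sub D).injOn
  have hf_maps : Set.MapsTo f ↑(Icc 1 D) ↑(Ioc 2 (2 ^ D)) := by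
    simpa only [coe_Icc, coe_Ioc] using mapsTo_two_pow_add_sub hD
  have h2D : 2 ≤ 2 ^ D := Nat.le_self_pow (by omega) 2
  calc ∑ i ∈ Icc 1 D, 2 ^ (D - i) * It ^ 2 ^ i
      ≤ ∑ i ∈ Icc 1 D, It ^ f i := sum_le_sum fun i _ => pow_mul_pow_le_pow_add hIt _ _
    _ = ∑ j ∈ (Icc 1 D).image f, It ^ j := (sum_image fun _ hi _ hj h => hf_inj hi hj h).symm
    _ ≤ ∑ j ∈ Ioc 2 (2 ^ D), It ^ j := sum_le_sum_of_subset (image_subset_iff.2 hf_maps)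
    _ < It ^ 2 + ∑ j ∈ Ioc 2 (2 ^ D), It ^ j := lt_add_of_pos_left _ (by positivity)
    _ = ∑ i ∈ Icc 2 (2 ^ D), It ^ i := add_sum_Ioc_eq_sum_Icc h2D
end

section
/- Variance of the entries of a constructed tensor ring: fix natural numbers d ≥ 1, R ≥ 1, and I₁,…,I_d ≥ 1, and let the family of all entries {U^(k)(a, i, b) : 1 ≤ k ≤ d, a, b ∈ Fin R, i ∈ Fin I_k} be independent, identically distributed real random variables, each with mean 0, variance σ², and finite second moment. For fixed indices i₁ ∈ Fin I₁, …, i_d ∈ Fin I_d, define the corresponding entry of the constructed tensor X = ∑_{r₀, r₁, …, r_{d-1} ∈ Fin R} U^(1)(r₀, i₁, r₁)·U^(2)(r₁, i₂, r₂)·⋯·U^(d)(r_{d-1}, i_d, r₀). Then E[X] = 0 and Var[X] = R^d·σ^{2d}. -/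
/-!
Write the entry as `X = ∑ r, P r`, where `P r` is the product of the `d` factor entries
`U^(k)(r k, i k, r (k + 1))`. Distinct `r` use distinct sets of entries, since the `k`-th entry
records `r k`. The entries being independent and centred, `E[P r] = 0`, and `E[P r * P s]`
vanishes for `r ≠ s` because some entry then occurs exactly once, while `E[(P r)²] = σ^(2d)`.
Hence `E[X] = 0` and `Var[X] = E[X²] = R^d σ^(2d)`.
-/

open MeasureTheory ProbabilityTheory Finset

namespace ProbabilityTheory

variable {Ω ι : Type*} [MeasurableSpace Ω] {μ : Measure Ω} {f : ι → Ω → ℝ}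

lemma iIndepFun.integrable_fun_finsetProd (h : iIndepFun f μ) (hf : ∀ i, Integrable (f i) μ)
    (s : Finset ι) : Integrable (fun ω ↦ ∏ i ∈ s, f i ω) μ := by
  have := h.isProbabilityMeasure
  classical
  induction s using Finset.induction_on with
  | empty => simp
  | insert a s ha ih =>
    simp_rw [prod_insert ha, mul_comm (f a _)]
    have hindep := h.indepFun_finsetProd_of_notMem₀ (fun i ↦ (hf i).aemeasurable) ha
    simpa only [Pi.mul_def, Finset.prod_apply] using
      hindep.integrable_mul (by rwa [prod_fn]) (hf a)

lemma iIndepFun.integral_fun_finsetProd_eq_prod_integral (h : iIndepFun f μ)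
    (hf : ∀ i, AEStronglyMeasurable (f i) μ) (s : Finset ι) :
    ∫ ω, ∏ i ∈ s, f i ω ∂μ = ∏ i ∈ s, ∫ ω, f i ω ∂μ := by
  simp_rw [← prod_coe_sort s]
  exact (h.precomp (g := ((↑) : s → ι)) Subtype.val_injective)
    |>.integral_fun_prod_eq_prod_integral fun i ↦ hf i

lemma iIndepFun.memLp_two_fun_finsetProd (h : iIndepFun f μ) (hf : ∀ i, MemLp (f i) 2 μ)
    (s : Finset ι) : MemLp (fun ω ↦ ∏ i ∈ s, f i ω) 2 μ := by
  refine (memLp_two_iff_integrable_sq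
    (s.aestronglyMeasurable_fun_prod fun i _ ↦ (hf i).1)).2 ?_
  simp_rw [← prod_pow]
  exact (h.comp (fun _ x ↦ x ^ 2) fun _ ↦ by fun_prop).integrable_fun_finsetProd
    (fun i ↦ (hf i).integrable_sq) s

section CenteredFamily

variable {σ : ℝ} (hindep : iIndepFun f μ) (hL2 : ∀ i, MemLp (f i) 2 μ)
  (hmean : ∀ i, ∫ ω, f i ω ∂μ = 0)
include hindep hL2 hmean

lemma iIndepFun.integral_fun_finsetProd_eq_zero {s : Finset ι} (hs : s.Nonempty) :
    ∫ ω, ∏ i ∈ s, f i ω ∂μ = 0 := by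
  obtain ⟨i, hi⟩ := hs
  rw [hindep.integral_fun_finsetProd_eq_prod_integral fun i ↦ (hL2 i).1]
  exact prod_eq_zero hi (hmean i)

lemma iIndepFun.integral_finsetProd_mul_finsetProd [DecidableEq ι]
    (hvar : ∀ i, variance (f i) μ = σ ^ 2) (A B : Finset ι) :
    ∫ ω, (∏ i ∈ A, f i ω) * ∏ i ∈ B, f i ω ∂μ = if A = B then σ ^ (2 * #A) else 0 := by
  -- `c i` counts the products, among the two, in which `f i` occurs
  set c : ι → ℕ := fun i ↦ (if i ∈ A then 1 else 0) + (if i ∈ B then 1 else 0)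
  have hprod ω : (∏ i ∈ A, f i ω) * ∏ i ∈ B, f i ω = ∏ i ∈ A ∪ B, f i ω ^ c i := by
    simp only [c, pow_add, prod_mul_distrib, pow_ite, pow_one, pow_zero, prod_ite_mem,
      union_inter_cancel_left, union_inter_cancel_right]
  have hsq : ∀ i, ∫ ω, f i ω ^ 2 ∂μ = σ ^ 2 := fun i ↦ by
    rw [← hvar i, variance_of_integral_eq_zero (hL2 i).1.aemeasurable (hmean i)]
  have hpow : iIndepFun (fun i ω ↦ f i ω ^ c i) μ :=
    hindep.comp (fun i x ↦ x ^ c i) fun _ ↦ by fun_prop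
  simp_rw [hprod]
  rw [hpow.integral_fun_finsetProd_eq_prod_integral fun i ↦ (hL2 i).1.pow (c i)]
  split_ifs with hAB
  · subst hAB
    rw [union_self, prod_congr rfl (g := fun _ ↦ σ ^ 2) fun i hi ↦ by simp [c, hi, hsq i],
      prod_const, pow_mul]
  · obtain ⟨i, hi⟩ := symmDiff_nonempty.2 hAB
    have hci : c i = 1 := by
      rcases mem_symmDiff.1 hi with ⟨hA, hB⟩ | ⟨hB, hA⟩ <;> simp [c, hA, hB]
    refine prod_eq_zero (symmDiff_subset_union hi) ?_
    simp [hci, hmean i]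

lemma iIndepFun.integral_sum_finsetProd_eq_zero {α : Type*} [Fintype α] {A : α → Finset ι}
    (hA : ∀ a, (A a).Nonempty) : ∫ ω, ∑ a, ∏ i ∈ A a, f i ω ∂μ = 0 := by
  have := hindep.isProbabilityMeasure
  rw [integral_finsetSum _ fun a _ ↦
    (hindep.memLp_two_fun_finsetProd hL2 (A a)).integrable one_le_two]
  exact sum_eq_zero fun a _ ↦ hindep.integral_fun_finsetProd_eq_zero hL2 hmean (hA a)

lemma iIndepFun.variance_sum_finsetProd (hvar : ∀ i, variance (f i) μ = σ ^ 2) {α : Type*}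
    [Fintype α] {A : α → Finset ι} (hA : Function.Injective A) (hne : ∀ a, (A a).Nonempty) :
    variance (fun ω ↦ ∑ a, ∏ i ∈ A a, f i ω) μ = ∑ a, σ ^ (2 * #(A a)) := by
  classical
  have := hindep.isProbabilityMeasure
  have hprod := hindep.memLp_two_fun_finsetProd hL2
  have hint : ∀ a b, Integrable (fun ω ↦ (∏ i ∈ A a, f i ω) * ∏ i ∈ A b, f i ω) μ :=
    fun a b ↦ (hprod (A a)).integrable_mul (hprod (A b))
  rw [variance_of_integral_eq_zero
    (memLp_finsetSum _ fun a _ ↦ hprod (A a)).1.aemeasurable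
    (hindep.integral_sum_finsetProd_eq_zero hL2 hmean hne)]
  simp_rw [sq, sum_mul_sum]
  rw [integral_finsetSum _ fun a _ ↦ integrable_finsetSum _ fun b _ ↦ hint a b]
  refine sum_congr rfl fun a _ ↦ ?_
  rw [integral_finsetSum _ fun b _ ↦ hint a b]
  simp [hindep.integral_finsetProd_mul_finsetProd hL2 hmean hvar, hA.eq_iff]

end CenteredFamily

end ProbabilityTheory

section TensorRing

variable {d R : ℕ} [NeZero d] {I : Fin d → ℕ}

/-- `k + 1` is taken in `Fin d`, so the last factor connects back to the first. -/
def tensorRingTermEntries (i : ∀ k, Fin (I k)) (r : Fin d → Fin R) :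
    Finset (Σ k : Fin d, Fin R × Fin (I k) × Fin R) :=
  univ.map ⟨fun k ↦ ⟨k, r k, i k, r (k + 1)⟩, fun _ _ h ↦ congrArg Sigma.fst h⟩

variable (i : ∀ k, Fin (I k))

lemma prod_tensorRingTermEntries {M : Type*} [CommMonoid M]
    (g : (Σ k : Fin d, Fin R × Fin (I k) × Fin R) → M) (r : Fin d → Fin R) :
    ∏ j ∈ tensorRingTermEntries i r, g j = ∏ k, g ⟨k, r k, i k, r (k + 1)⟩ :=
  prod_map _ _ _

lemma card_tensorRingTermEntries (r : Fin d → Fin R) : #(tensorRingTermEntries i r) = d := by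
  simp [tensorRingTermEntries]

lemma tensorRingTermEntries_nonempty (r : Fin d → Fin R) : (tensorRingTermEntries i r).Nonempty :=
  card_pos.1 <| (card_tensorRingTermEntries i r).symm ▸ NeZero.pos d

lemma tensorRingTermEntries_injective : Function.Injective (tensorRingTermEntries (R := R) i) := by
  intro r s hrs
  funext k
  have hk : (⟨k, r k, i k, r (k + 1)⟩ : Σ k : Fin d, Fin R × Fin (I k) × Fin R) ∈
      tensorRingTermEntries i s := hrs ▸ mem_map_of_mem _ (mem_univ k)
  obtain ⟨k', -, hk'⟩ := mem_map.1 hk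
  obtain ⟨rfl, h⟩ := Sigma.mk.inj_iff.1 hk'
  exact (Prod.mk.inj (eq_of_heq h)).1.symm

end TensorRing

theorem tensor_ring_entry_mean_variance_general {Ω : Type*} [MeasurableSpace Ω]
    {μ : Measure Ω} [IsProbabilityMeasure μ]
    (d R : ℕ) [NeZero d] (I : Fin d → ℕ)
    (σ : ℝ)
    (U : ∀ k : Fin d, Fin R → Fin (I k) → Fin R → Ω → ℝ)
    (hindep : iIndepFun
      (fun j : Σ k : Fin d, Fin R × Fin (I k) × Fin R => U j.1 j.2.1 j.2.2.1 j.2.2.2) μ)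
    (hL2 : ∀ j : Σ k : Fin d, Fin R × Fin (I k) × Fin R,
      MemLp (U j.1 j.2.1 j.2.2.1 j.2.2.2) 2 μ)
    (hmean : ∀ j : Σ k : Fin d, Fin R × Fin (I k) × Fin R,
      ∫ ω, U j.1 j.2.1 j.2.2.1 j.2.2.2 ω ∂μ = 0)
    (hvar : ∀ j : Σ k : Fin d, Fin R × Fin (I k) × Fin R,
      variance (U j.1 j.2.1 j.2.2.1 j.2.2.2) μ = σ ^ 2)
    (i : ∀ k : Fin d, Fin (I k))
    (X : Ω → ℝ)
    (hX : X = fun ω => ∑ r : Fin d → Fin R, ∏ k : Fin d, U k (r k) (i k) (r (k + 1)) ω) :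
    (∫ ω, X ω ∂μ = 0) ∧ variance X μ = (R : ℝ) ^ d * σ ^ (2 * d) := by
  obtain rfl : X = fun ω ↦
      ∑ r, ∏ j ∈ tensorRingTermEntries i r, U j.1 j.2.1 j.2.2.1 j.2.2.2 ω := by
    simp only [hX, prod_tensorRingTermEntries]
  have hne := tensorRingTermEntries_nonempty (R := R) i
  refine ⟨hindep.integral_sum_finsetProd_eq_zero hL2 hmean hne, ?_⟩
  rw [hindep.variance_sum_finsetProd hL2 hmean hvar (tensorRingTermEntries_injective i) hne]
  simp [card_tensorRingTermEntries]

/-- Variance of an entry of a constructed tensor ring: if all entries of the `d`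
third-order factors `U^(k) ∈ ℝ^{R × I_k × R}` are i.i.d. real random variables with
mean 0, variance `σ²`, and finite second moment, then the entry
`X = ∑_{r₀,…,r_{d-1}} U^(1)(r₀,i₁,r₁)·U^(2)(r₁,i₂,r₂)⋯U^(d)(r_{d-1},i_d,r₀)`
of the constructed tensor has mean 0 and variance `R^d · σ^(2d)`. -/
theorem tensor_ring_entry_mean_variance {Ω : Type*} [MeasurableSpace Ω]
    {μ : Measure Ω} [IsProbabilityMeasure μ]
    (d R : ℕ) [NeZero d] (hd : 1 ≤ d) (hR : 1 ≤ R) (I : Fin d → ℕ) (hI : ∀ k, 1 ≤ I k)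
    (σ : ℝ)
    (U : ∀ k : Fin d, Fin R → Fin (I k) → Fin R → Ω → ℝ)
    (hindep : iIndepFun
      (fun j : Σ k : Fin d, Fin R × Fin (I k) × Fin R => U j.1 j.2.1 j.2.2.1 j.2.2.2) μ)
    (hident : ∀ j j' : Σ k : Fin d, Fin R × Fin (I k) × Fin R,
      IdentDistrib (U j.1 j.2.1 j.2.2.1 j.2.2.2) (U j'.1 j'.2.1 j'.2.2.1 j'.2.2.2) μ μ)
    (hL2 : ∀ j : Σ k : Fin d, Fin R × Fin (I k) × Fin R,
      MemLp (U j.1 j.2.1 j.2.2.1 j.2.2.2) 2 μ)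
    (hmean : ∀ j : Σ k : Fin d, Fin R × Fin (I k) × Fin R,
      ∫ ω, U j.1 j.2.1 j.2.2.1 j.2.2.2 ω ∂μ = 0)
    (hvar : ∀ j : Σ k : Fin d, Fin R × Fin (I k) × Fin R,
      variance (U j.1 j.2.1 j.2.2.1 j.2.2.2) μ = σ ^ 2)
    (i : ∀ k : Fin d, Fin (I k))
    (X : Ω → ℝ)
    (hX : X = fun ω => ∑ r : Fin d → Fin R, ∏ k : Fin d, U k (r k) (i k) (r (k + 1)) ω) :
    (∫ ω, X ω ∂μ = 0) ∧ variance X μ = (R : ℝ) ^ d * σ ^ (2 * d) :=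
  tensor_ring_entry_mean_variance_general d R I σ U hindep hL2 hmean hvar i X hX
end
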